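/- Let 𝔥 be a complex Hilbert space, let A be a bounded operator on 𝔥 with Re⟨Af, f⟩ ≥ 0 for all f ∈ 𝔥, and let K be a bounded self-adjoint operator on 𝔥. Then for every t ≥ 0, ‖exp(−tA) − exp(−itK)‖_{B(𝔥)} ≤ t · ‖A − iK‖_{B(𝔥)}. -/

import Mathlib

open Filter Topology

set_option maxHeartbeats 1000000
set_option synthInstance.maxHeartbeats 400000

lemma exp_contraction_aux
    {𝔥 : Type*} [NormedAddCommGroup 𝔥] [InnerProductSpace ℂ 𝔥] [CompleteSpace 𝔥]
    (A : 𝔥 →L[ℂ] 𝔥) (hA : ∀ f : 𝔥, 0 ≤ (inner ℂ (A f) f : ℂ).re)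
    {s : ℝ} (hs : 0 ≤ s) :
    ‖NormedSpace.exp ((-(s : ℂ)) • A)‖ ≤ 1 := by
  refine ContinuousLinearMap.opNorm_le_bound _ zero_le_one (fun f => ?_)
  rw [one_mul]
  set u : ℝ → 𝔥 := fun r => NormedSpace.exp ((-(r : ℂ)) • A) f with hu_def
  have hu : ∀ r : ℝ, HasDerivAt u (-(A (u r))) r := by
    intro r
    have h1 : HasDerivAt (fun z : ℂ => NormedSpace.exp (z • A))
        (NormedSpace.exp ((-(r : ℂ)) • A) * A) (-(r : ℂ)) :=
      hasDerivAt_exp_smul_const A (-(r : ℂ))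
    have h2 : HasDerivAt (fun r : ℝ => (-(r : ℂ))) (-1 : ℂ) r := by
      have h := (Complex.ofRealCLM.hasDerivAt (x := r)).neg
      simp only [Complex.ofRealCLM_apply, Complex.ofReal_one] at h
      exact h
    have h3 := h1.scomp r h2
    have h4 := ((ContinuousLinearMap.apply ℂ 𝔥 f).restrictScalars
      ℝ).hasFDerivAt.comp_hasDerivAt r h3
    have hcomm : NormedSpace.exp ((-(r : ℂ)) • A) * A
        = A * NormedSpace.exp ((-(r : ℂ)) • A) :=
      (((Commute.refl A).smul_left (-(r : ℂ))).exp_left)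
    have h4' : HasDerivAt u
        (((-1 : ℂ) • (NormedSpace.exp ((-(r : ℂ)) • A) * A)) f) r := h4
    have heq : ((-1 : ℂ) • (NormedSpace.exp ((-(r : ℂ)) • A) * A)) f = -(A (u r)) := by
      rw [hcomm]
      simp [hu_def]
    rwa [heq] at h4'
  set φ : ℝ → ℝ := fun r => (inner ℂ (u r) (u r) : ℂ).re with hφ_def
  have hφ : ∀ r : ℝ, HasDerivAt φ
      (((inner ℂ (u r) (-(A (u r))) : ℂ) + (inner ℂ (-(A (u r))) (u r) : ℂ)).re) r := by
    intro r
    exact (Complex.reCLM.hasFDerivAt.comp_hasDerivAt r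
      (HasDerivAt.inner ℂ (hu r) (hu r)))
  have hφ' : ∀ r : ℝ, deriv φ r ≤ 0 := by
    intro r
    rw [(hφ r).deriv]
    have h5 : (inner ℂ (u r) (-(A (u r))) : ℂ) = starRingEnd ℂ (inner ℂ (-(A (u r))) (u r)) :=
      (inner_conj_symm _ _).symm
    rw [h5]
    rw [Complex.add_re, Complex.conj_re]
    have := hA (u r)
    simp only [inner_neg_left, Complex.neg_re]
    linarith
  have hanti : Antitone φ :=
    antitone_of_deriv_nonpos (fun r => (hφ r).differentiableAt) hφ'
  have h0 : φ 0 = ‖f‖ ^ 2 := by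
    simp only [hφ_def, hu_def]
    norm_num [NormedSpace.exp_zero]
    simpa using inner_self_eq_norm_sq (𝕜 := ℂ) f
  have hs' : φ s = ‖u s‖ ^ 2 := by
    simp only [hφ_def]
    simpa using inner_self_eq_norm_sq (𝕜 := ℂ) (u s)
  have hle := hanti hs
  rw [h0, hs'] at hle
  exact (pow_le_pow_iff_left₀ (norm_nonneg _) (norm_nonneg _) two_ne_zero).mp hle

/-- The semigroup-comparison estimate in the proof of **Corollary 3.2**: if `A` is a
bounded operator on a complex Hilbert space with `Re⟨Af, f⟩ ≥ 0` for all `f`, and `K` is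
a bounded self-adjoint operator, then `‖exp(-tA) - exp(-itK)‖ ≤ t ‖A - iK‖` for all
`t ≥ 0`. -/
theorem exp_dissipative_minus_exp_unitary_norm_le
    {𝔥 : Type*} [NormedAddCommGroup 𝔥] [InnerProductSpace ℂ 𝔥] [CompleteSpace 𝔥]
    (A : 𝔥 →L[ℂ] 𝔥) (hA : ∀ f : 𝔥, 0 ≤ (inner ℂ (A f) f : ℂ).re)
    (K : 𝔥 →L[ℂ] 𝔥) (hK : IsSelfAdjoint K) :
    ∀ t : ℝ, 0 ≤ t →
      ‖NormedSpace.exp ((-(t : ℂ)) • A) -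
          NormedSpace.exp ((-(Complex.I * (t : ℂ))) • K)‖ ≤
        t * ‖A - Complex.I • K‖ := by
  intro t ht
  -- `iK` is also "dissipative" (real part of its quadratic form vanishes)
  have hIK : ∀ f : 𝔥, 0 ≤ (inner ℂ ((Complex.I • K) f) f : ℂ).re := by
    intro f
    have hreal : (starRingEnd ℂ) (inner ℂ (K f) f : ℂ) = (inner ℂ (K f) f : ℂ) := by
      rw [inner_conj_symm]
      conv_lhs => rw [← hK.adjoint_eq]
      rw [ContinuousLinearMap.adjoint_inner_right]
    have him : (inner ℂ (K f) f : ℂ).im = 0 := by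
      have := congrArg Complex.im hreal
      simpa using by linarith [congrArg Complex.im hreal, Complex.conj_im (inner ℂ (K f) f : ℂ)]
    have : ((Complex.I • K) f : 𝔥) = Complex.I • (K f) := rfl
    rw [this, inner_smul_left]
    simp [Complex.mul_re, him]
  set F : ℝ → (𝔥 →L[ℂ] 𝔥) := fun s =>
    NormedSpace.exp (((s : ℂ) - t) • A) * NormedSpace.exp ((-(Complex.I * s)) • K)
    with hF_def
  set G : ℝ → (𝔥 →L[ℂ] 𝔥) := fun s =>
    NormedSpace.exp (((s : ℂ) - t) • A) *
      ((A - Complex.I • K) * NormedSpace.exp ((-(Complex.I * s)) • K)) with hG_def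
  have hF : ∀ s : ℝ, HasDerivAt F (G s) s := by
    intro s
    have hX : HasDerivAt (fun r : ℝ => NormedSpace.exp (((r : ℂ) - t) • A))
        ((1 : ℂ) • (NormedSpace.exp (((s : ℂ) - t) • A) * A)) s := by
      have h1 := hasDerivAt_exp_smul_const A ((s : ℂ) - t)
      have h2 : HasDerivAt (fun r : ℝ => ((r : ℂ) - t)) (1 : ℂ) s := by
        simpa using (Complex.ofRealCLM.hasDerivAt (x := s)).sub_const (t : ℂ)
      exact h1.scomp s h2
    have hY : HasDerivAt (fun r : ℝ => NormedSpace.exp ((-(Complex.I * r)) • K))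
        ((-Complex.I) • (NormedSpace.exp ((-(Complex.I * s)) • K) * K)) s := by
      have h1 := hasDerivAt_exp_smul_const K (-(Complex.I * s))
      have h2 : HasDerivAt (fun r : ℝ => (-(Complex.I * r))) (-Complex.I) s := by
        have h := ((Complex.ofRealCLM.hasDerivAt (x := s)).const_mul Complex.I).neg
        simp only [Complex.ofRealCLM_apply, Complex.ofReal_one, mul_one] at h
        exact h
      exact h1.scomp s h2
    have h3 := hX.mul hY
    have hcomm : K * NormedSpace.exp ((-(Complex.I * s)) • K)
        = NormedSpace.exp ((-(Complex.I * s)) • K) * K :=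
      (((Commute.refl K).smul_right (-(Complex.I * (s : ℂ)))).exp_right).eq
    have heq : (1 : ℂ) • (NormedSpace.exp (((s : ℂ) - t) • A) * A) *
          NormedSpace.exp ((-(Complex.I * s)) • K) +
        NormedSpace.exp (((s : ℂ) - t) • A) *
          ((-Complex.I) • (NormedSpace.exp ((-(Complex.I * s)) • K) * K)) = G s := by
      rw [hG_def]
      have e1 : (1 : ℂ) • (NormedSpace.exp (((s : ℂ) - t) • A) * A) *
            NormedSpace.exp ((-(Complex.I * s)) • K)
          = NormedSpace.exp (((s : ℂ) - t) • A) *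
            (A * NormedSpace.exp ((-(Complex.I * s)) • K)) := by
        rw [one_smul, mul_assoc]
      have e2 : NormedSpace.exp (((s : ℂ) - t) • A) *
            ((-Complex.I) • (NormedSpace.exp ((-(Complex.I * s)) • K) * K))
          = -(Complex.I • (NormedSpace.exp (((s : ℂ) - t) • A) *
              (NormedSpace.exp ((-(Complex.I * s)) • K) * K))) := by
        rw [neg_smul, mul_neg, mul_smul_comm]
      have e3 : (A - Complex.I • K) * NormedSpace.exp ((-(Complex.I * s)) • K)
          = A * NormedSpace.exp ((-(Complex.I * s)) • K) -
            Complex.I • (NormedSpace.exp ((-(Complex.I * s)) • K) * K) := by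
        rw [sub_mul, smul_mul_assoc, hcomm]
      rw [e1, e2]
      show _ = NormedSpace.exp (((s : ℂ) - t) • A) *
        ((A - Complex.I • K) * NormedSpace.exp ((-(Complex.I * s)) • K))
      rw [e3, mul_sub, mul_smul_comm]
      exact (sub_eq_add_neg _ _).symm
    rw [← heq]
    exact h3
  have hGcont : Continuous G := by
    apply Continuous.mul
    · exact (continuous_iff_continuousAt.2 fun x => (NormedSpace.exp_analytic (𝕂 := ℂ) x).continuousAt).comp (by fun_prop)
    · exact continuous_const.mul ((continuous_iff_continuousAt.2 fun x => (NormedSpace.exp_analytic (𝕂 := ℂ) x).continuousAt).comp (by fun_prop))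
  have hint : IntervalIntegrable G MeasureTheory.volume 0 t :=
    hGcont.intervalIntegrable 0 t
  have key : (∫ s in (0:ℝ)..t, G s) = F t - F 0 :=
    intervalIntegral.integral_eq_sub_of_hasDerivAt (fun s _ => hF s) hint
  have hFt : F t = NormedSpace.exp ((-(Complex.I * (t : ℂ))) • K) := by
    rw [hF_def]
    simp [NormedSpace.exp_zero]
  have hF0 : F 0 = NormedSpace.exp ((-(t : ℂ)) • A) := by
    rw [hF_def]
    simp [NormedSpace.exp_zero]
  have hbound : ∀ s ∈ Set.uIoc (0:ℝ) t, ‖G s‖ ≤ ‖A - Complex.I • K‖ := by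
    intro s hsmem
    rw [Set.uIoc_of_le ht] at hsmem
    obtain ⟨hs0, hst⟩ := hsmem
    have hX : ‖NormedSpace.exp (((s : ℂ) - t) • A)‖ ≤ 1 := by
      have : ((s : ℂ) - t) = -(((t - s : ℝ) : ℂ)) := by push_cast; ring
      rw [this]
      exact exp_contraction_aux A hA (by linarith)
    have hY : ‖NormedSpace.exp ((-(Complex.I * s)) • K)‖ ≤ 1 := by
      have : (-(Complex.I * (s : ℂ))) • K = (-((s : ℝ) : ℂ)) • (Complex.I • K) := by
        rw [smul_smul]; ring_nf
      rw [this]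
      exact exp_contraction_aux (Complex.I • K) hIK hs0.le
    calc ‖G s‖ ≤ ‖NormedSpace.exp (((s : ℂ) - t) • A)‖ *
          (‖A - Complex.I • K‖ * ‖NormedSpace.exp ((-(Complex.I * s)) • K)‖) :=
        (norm_mul_le _ _).trans (by gcongr; exact norm_mul_le _ _)
      _ ≤ 1 * (‖A - Complex.I • K‖ * 1) := by gcongr
      _ = ‖A - Complex.I • K‖ := by ring
  have hnorm := intervalIntegral.norm_integral_le_of_norm_le_const hbound
  rw [key, hFt, hF0] at hnorm
  rw [← norm_sub_rev] at hnorm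
  calc ‖NormedSpace.exp ((-(t : ℂ)) • A) -
      NormedSpace.exp ((-(Complex.I * (t : ℂ))) • K)‖
      ≤ ‖A - Complex.I • K‖ * |t - 0| := hnorm
    _ = t * ‖A - Complex.I • K‖ := by rw [sub_zero, abs_of_nonneg ht, mul_comm]
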